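/- If (M, Enc, φ) generates M' and (M', Enc', φ') generates N, then (M, φ⁻¹(Enc'), φ' ∘ φ|_{φ⁻¹(Enc')}) generates N. In other words, the relation 'generates' between Turing machines is transitive under composition of decoders. -/

import Mathlib

/-- When run from any configuration, the machine passes through `Enc` infinitely often. -/
def PassesInfOften {C : Type*} (step : C → C) (Enc : Set C) : Prop :=
  ∀ x : C, ∀ n : ℕ, ∃ m : ℕ, n < m ∧ step^[m] x ∈ Enc

/-- `(M, Enc, φ)` generates `M'`: φ is a surjective decoder from encodings onto the
configurations of `M'`, `M` passes through `Enc` infinitely often, and the first-return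
map to `Enc` commutes with the step function of `M'` via φ. -/
def Generates {C C' : Type*} (step : C → C) (step' : C' → C')
    (Enc : Set C) (φ : C → C') : Prop :=
  Set.SurjOn φ Enc Set.univ ∧
  PassesInfOften step Enc ∧
  ∀ x ∈ Enc, ∀ t : ℕ, 0 < t → step^[t] x ∈ Enc →
    (∀ s : ℕ, 0 < s → s < t → step^[s] x ∉ Enc) →
    φ (step^[t] x) = step' (φ x)

/-!
Write `Enc₂ := Enc ∩ φ⁻¹(Enc')`. Starting from an encoding `x`, the successive returns of `M` to
`Enc` decode under `φ` to the successive steps of `M'` from `φ x`, so the returns of `M` to `Enc₂`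
are exactly the returns of `M'` to `Enc'`, and the first return to `Enc₂` decodes to the first
return of `M'` to `Enc'`, on which `φ'` intertwines with the step of `N`. The same correspondence
shows that every run of `M'` (which meets `Enc'` infinitely often) is traced by returns of `M`
to `Enc`, so `M` meets `Enc₂` infinitely often.
-/

open Function

def IsFirstReturn {C : Type*} (f : C → C) (S : Set C) (x : C) (t : ℕ) : Prop :=
  0 < t ∧ f^[t] x ∈ S ∧ ∀ s, 0 < s → s < t → f^[s] x ∉ S

section FirstReturn

variable {C : Type*} {f : C → C} {S : Set C} {x : C}

theorem exists_isFirstReturn_le {t : ℕ} (ht : 0 < t) (hx : f^[t] x ∈ S) :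
    ∃ s ≤ t, IsFirstReturn f S x s := by
  classical
  have hex : ∃ s, 0 < s ∧ f^[s] x ∈ S := ⟨t, ht, hx⟩
  obtain ⟨hpos, hmem⟩ := Nat.find_spec hex
  exact ⟨Nat.find hex, Nat.find_min' hex ⟨ht, hx⟩, hpos, hmem,
    fun s hs hlt hsS => Nat.find_min hex hlt ⟨hs, hsS⟩⟩

theorem PassesInfOften.exists_isFirstReturn (h : PassesInfOften f S) (x : C) :
    ∃ t, IsFirstReturn f S x t := by
  obtain ⟨t, ht, hx⟩ := h x 0
  obtain ⟨s, -, hs⟩ := exists_isFirstReturn_le ht hx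
  exact ⟨s, hs⟩

theorem isFirstReturn_add_iff {a b : ℕ} (hmiss : ∀ s, 0 < s → s ≤ a → f^[s] x ∉ S) :
    IsFirstReturn f S x (b + a) ↔ IsFirstReturn f S (f^[a] x) b := by
  simp only [IsFirstReturn, iterate_add_apply]
  constructor
  · rintro ⟨hpos, hmem, hmin⟩
    refine ⟨Nat.pos_of_ne_zero ?_, hmem, fun s hs hsb => ?_⟩
    · rintro rfl
      exact hmiss a (by omega) le_rfl hmem
    · rw [← iterate_add_apply]
      exact hmin (s + a) (by omega) (by omega)
  · rintro ⟨hb, hmem, hmin⟩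
    refine ⟨by omega, hmem, fun s hs hsba => ?_⟩
    rcases le_or_gt s a with hsa | has
    · exact hmiss s hs hsa
    · obtain ⟨r, rfl⟩ := Nat.exists_eq_add_of_lt has
      have := hmin (r + 1) (by omega) (by omega)
      rwa [← iterate_add_apply, show r + 1 + a = a + r + 1 by omega] at this

end FirstReturn

namespace Generates

variable {C C' : Type*} {step : C → C} {step' : C' → C'} {Enc : Set C} {φ : C → C'}

theorem map_iterate_of_isFirstReturn (h : Generates step step' Enc φ) {x : C} (hx : x ∈ Enc)
    {t : ℕ} (ht : IsFirstReturn step Enc x t) : φ (step^[t] x) = step' (φ x) :=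
  h.2.2 x hx t ht.1 ht.2.1 ht.2.2

theorem exists_iterate_eq (h : Generates step step' Enc φ) {y : C} (hy : y ∈ Enc) (k : ℕ) :
    ∃ T, step^[T] y ∈ Enc ∧ φ (step^[T] y) = step'^[k] (φ y) := by
  induction k with
  | zero => exact ⟨0, hy, rfl⟩
  | succ k ih =>
    obtain ⟨T, hT, hφT⟩ := ih
    obtain ⟨m, hm⟩ := h.2.1.exists_isFirstReturn (step^[T] y)
    refine ⟨m + T, by rw [iterate_add_apply]; exact hm.2.1, ?_⟩
    rw [iterate_add_apply, h.map_iterate_of_isFirstReturn hT hm, hφT, iterate_succ_apply']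

theorem passesInfOften_inter_preimage (h : Generates step step' Enc φ) {S : Set C'}
    (hS : PassesInfOften step' S) : PassesInfOften step (Enc ∩ φ ⁻¹' S) := by
  intro x n
  obtain ⟨m, hnm, hm⟩ := h.2.1 x n
  obtain ⟨k, -, hk⟩ := hS (φ (step^[m] x)) 0
  obtain ⟨T, hT, hφT⟩ := h.exists_iterate_eq hm k
  refine ⟨T + m, by omega, ?_⟩
  rw [iterate_add_apply]
  exact ⟨hT, by rwa [Set.mem_preimage, hφT]⟩

theorem exists_isFirstReturn_of_inter_preimage (h : Generates step step' Enc φ) {S : Set C'}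
    {t : ℕ} {x : C} (hx : x ∈ Enc) (ht : IsFirstReturn step (Enc ∩ φ ⁻¹' S) x t) :
    ∃ k, IsFirstReturn step' S (φ x) k ∧ φ (step^[t] x) = step'^[k] (φ x) := by
  induction t using Nat.strong_induction_on generalizing x with
  | _ t ih =>
  obtain ⟨t₁, ht₁t, ht₁⟩ := exists_isFirstReturn_le ht.1 ht.2.1.1
  have hφ₁ := h.map_iterate_of_isFirstReturn hx ht₁
  rcases ht₁t.eq_or_lt with rfl | hlt
  · refine ⟨1, ⟨one_pos, ?_, fun s hs hs1 => absurd hs1 (by omega)⟩, hφ₁⟩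
    rw [iterate_one, ← hφ₁]
    exact ht.2.1.2
  · obtain ⟨d, rfl⟩ := Nat.exists_eq_add_of_le' ht₁t
    -- before time `t₁` the orbit misses `Enc`, and at `t₁` it misses `φ⁻¹' S` by minimality of `t`
    have hmiss : ∀ s, 0 < s → s ≤ t₁ → step^[s] x ∉ Enc ∩ φ ⁻¹' S := by
      intro s hs hst₁
      rcases hst₁.lt_or_eq with hlt₁ | rfl
      · exact fun hmem => ht₁.2.2 s hs hlt₁ hmem.1
      · exact ht.2.2 s hs hlt
    obtain ⟨k, hk, hφk⟩ :=
      ih d (Nat.lt_add_of_pos_right ht₁.1) ht₁.2.1 ((isFirstReturn_add_iff hmiss).1 ht)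
    have hφx : step' (φ x) ∉ S := fun hS =>
      hmiss t₁ ht₁.1 le_rfl ⟨ht₁.2.1, by rwa [← hφ₁] at hS⟩
    refine ⟨k + 1, (isFirstReturn_add_iff ?_).2 ?_, ?_⟩
    · intro s hs hs1
      rwa [show s = 1 by omega]
    · rwa [iterate_one, ← hφ₁]
    · rw [iterate_add_apply, hφk, hφ₁, iterate_succ_apply]

end Generates

/-- if (M, Enc, φ) generates M' and (M', Enc', φ') generates N, then
(M, φ⁻¹(Enc'), φ' ∘ φ) generates N. -/
theorem stmt11 {C C' C'' : Type*} (step : C → C) (step' : C' → C') (step'' : C'' → C'')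
    (Enc : Set C) (φ : C → C') (Enc' : Set C') (φ' : C' → C'')
    (h1 : Generates step step' Enc φ) (h2 : Generates step' step'' Enc' φ') :
    Generates step step'' (Enc ∩ φ ⁻¹' Enc') (φ' ∘ φ) := by
  refine ⟨?_, h1.passesInfOften_inter_preimage h2.2.1, ?_⟩
  · have hsurj : Set.SurjOn φ (Enc ∩ φ ⁻¹' Enc') Enc' := fun y hy => by
      obtain ⟨x, hx, rfl⟩ := h1.1 (Set.mem_univ y)
      exact ⟨x, ⟨hx, hy⟩, rfl⟩
    exact h2.1.comp hsurj
  · rintro x ⟨hx, hx'⟩ t ht htE hmin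
    obtain ⟨k, hk, hφk⟩ := h1.exists_isFirstReturn_of_inter_preimage hx ⟨ht, htE, hmin⟩
    rw [comp_apply, hφk, h2.map_iterate_of_isFirstReturn hx' hk, comp_apply]
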